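/- arXiv:1105.6017 — 3 statements merged into one kernel-verified Lean document; each statement's English description precedes it below -/
import Mathlib

section
/- Let x_1, ..., x_n be linearly independent unit vectors in ℝ^n and let D = convexHull {0, x_1, ..., x_n}. For each i ∈ {1, ..., n} define the map T_i : D → ℝ^n by T_i(∑_{j=1}^n α_j x_j) = (1/2) ∑_{j=1}^n α_j x_j + (1/2)(∑_{j=1}^n α_j) x_i, where (α_1, ..., α_n) are the (unique) coefficients of a point of D in the basis x_1, ..., x_n. Then μ_n(D) ≤ 2^n ∑_{i=1}^n μ_n(T_i(D)). -/
/-!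
On the simplex `D`, `T i` is the linear map `L i y = (y + (∑ coordinates of y) • x i) / 2`, half
a transvection, so `det (L i) = 2 / 2 ^ n`. For `y ∈ D` choose `i` maximizing `⟪x i, y⟫`; then
`‖y‖ ≤ ‖L i y‖`, and since the density `ρ` of `μ_n` increases with the norm,
`ρ y ≤ ∑ i, ρ (L i y)`. Integrating over `D` and substituting `z = L i y` in each summand gives
`μ_n(D) ≤ 2 ^ (n - 1) ∑ i, μ_n(L i D)`.
-/

open MeasureTheory Metric Set

/-- Hyperbolic volume in the Klein model: Lebesgue measure with density
`x ↦ (1 - ‖x‖²)^{-(n+1)/2}`, restricted to the open unit ball. -/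
noncomputable def hypVol (n : ℕ) : Measure (EuclideanSpace ℝ (Fin n)) :=
  (((volume : Measure (EuclideanSpace ℝ (Fin n)))).restrict (ball 0 1)).withDensity
    fun x => ENNReal.ofReal ((1 - ‖x‖ ^ 2) ^ (-((n : ℝ) + 1) / 2))

open scoped ENNReal RealInnerProductSpace

section InnerProduct

variable {ι E : Type*} [Fintype ι] [NormedAddCommGroup E] [InnerProductSpace ℝ E]

theorem norm_sum_smul_le_sum {x : ι → E} (hx : ∀ i, ‖x i‖ ≤ 1) {α : ι → ℝ}
    (hα : ∀ j, 0 ≤ α j) : ‖∑ j, α j • x j‖ ≤ ∑ j, α j :=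
  (norm_sum_le _ _).trans <| Finset.sum_le_sum fun j _ => by
    rw [norm_smul, Real.norm_of_nonneg (hα j)]
    exact mul_le_of_le_one_right (hα j) (hx j)

/-- Choosing `i` with `⟪x i, y⟫` maximal gives `‖y‖² ≤ s ⟪x i, y⟫` and `‖y‖ ≤ s`, hence
`‖y + s • x i‖² = ‖y‖² + 2 s ⟪x i, y⟫ + s² ≥ 4 ‖y‖²`. -/
theorem exists_norm_le_norm_half_smul_add [Nonempty ι] {x : ι → E} (hx : ∀ i, ‖x i‖ = 1)
    {α : ι → ℝ} (hα : ∀ j, 0 ≤ α j) :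
    ∃ i, ‖∑ j, α j • x j‖ ≤ ‖(1 / 2 : ℝ) • (∑ j, α j • x j + (∑ j, α j) • x i)‖ := by
  set y := ∑ j, α j • x j
  set s := ∑ j, α j
  obtain ⟨i, -, hi⟩ := Finset.exists_max_image Finset.univ (fun j => ⟪x j, y⟫)
    Finset.univ_nonempty
  refine ⟨i, ?_⟩
  have hs : 0 ≤ s := Finset.sum_nonneg fun j _ => hα j
  have hys : ‖y‖ ≤ s := norm_sum_smul_le_sum (fun i => (hx i).le) hα
  have hinner : ‖y‖ ^ 2 ≤ s * ⟪x i, y⟫ := calc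
    ‖y‖ ^ 2 = ⟪∑ j, α j • x j, y⟫ := (real_inner_self_eq_norm_sq y).symm
    _ = ∑ j, α j * ⟪x j, y⟫ := by simp only [sum_inner, real_inner_smul_left]
    _ ≤ s * ⟪x i, y⟫ := by
      rw [Finset.sum_mul]
      exact Finset.sum_le_sum fun j _ =>
        mul_le_mul_of_nonneg_left (hi j (Finset.mem_univ j)) (hα j)
  have hsq : (2 * ‖y‖) ^ 2 ≤ ‖y + s • x i‖ ^ 2 := by
    rw [norm_add_sq_real, real_inner_smul_right, norm_smul, hx, Real.norm_of_nonneg hs,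
      real_inner_comm]
    nlinarith [norm_nonneg y]
  have h2 : 2 * ‖y‖ ≤ ‖y + s • x i‖ :=
    (pow_le_pow_iff_left₀ (by positivity) (norm_nonneg _) two_ne_zero).1 hsq
  rw [norm_smul, Real.norm_of_nonneg (by norm_num)]
  linarith

end InnerProduct

theorem LinearMap.lintegral_image_eq_abs_det_mul {E : Type*} [NormedAddCommGroup E]
    [NormedSpace ℝ E] [FiniteDimensional ℝ E] [MeasurableSpace E] [BorelSpace E]
    (μ : Measure E) [μ.IsAddHaarMeasure] {L : E →ₗ[ℝ] E} (hL : LinearMap.det L ≠ 0)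
    {s : Set E} (hs : MeasurableSet s) (g : E → ℝ≥0∞) :
    ∫⁻ x in L '' s, g x ∂μ = ENNReal.ofReal |LinearMap.det L| * ∫⁻ x in s, g (L x) ∂μ := by
  rw [lintegral_image_eq_lintegral_abs_det_fderiv_mul μ hs (f := L)
    (fun _ _ => L.toContinuousLinearMap.hasFDerivAt.hasFDerivWithinAt)
    (LinearMap.equivOfDetNeZero L hL).injective.injOn,
    lintegral_const_mul' _ _ ENNReal.ofReal_ne_top]
  rfl

namespace Module.Basis

variable {ι E : Type*} [Fintype ι]

theorem convexHull_zero_union_range_subset {𝕜 : Type*} [Field 𝕜] [LinearOrder 𝕜]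
    [IsStrictOrderedRing 𝕜] [AddCommGroup E] [Module 𝕜 E] (b : Basis ι 𝕜 E) :
    convexHull 𝕜 ({0} ∪ range b) ⊆ {y | (∀ j, 0 ≤ b.repr y j) ∧ ∑ j, b.repr y j ≤ 1} := by
  classical
  refine convexHull_min ?_ ?_
  · rintro _ (rfl | ⟨i, rfl⟩)
    · simp
    · simp [Finsupp.single_apply, apply_ite]
  · rintro u ⟨hu₀, hu₁⟩ v ⟨hv₀, hv₁⟩ s t hs ht hst
    simp only [map_add, map_smul, Finsupp.coe_add, Finsupp.coe_smul, Pi.add_apply,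
      Pi.smul_apply, smul_eq_mul, Finset.sum_add_distrib, ← Finset.mul_sum, mem_ofPred_eq]
    refine ⟨fun j => by have := hu₀ j; have := hv₀ j; positivity, ?_⟩
    nlinarith

variable [NormedAddCommGroup E] [InnerProductSpace ℝ E] (b : Basis ι ℝ E)

/-- Sends `b j` to the midpoint of `b i` and `b j`, so it maps the simplex `conv {0, b}` onto
the cone `T i (D)` of the statement. -/
noncomputable def coneMap (i : ι) : E →ₗ[ℝ] E :=
  (1 / 2 : ℝ) • LinearMap.transvection (∑ j, b.coord j) (b i)

theorem coneMap_apply (i : ι) (y : E) :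
    b.coneMap i y = (1 / 2 : ℝ) • (y + (∑ j, b.repr y j) • b i) := by
  simp [coneMap, LinearMap.transvection.apply]

theorem det_coneMap [FiniteDimensional ℝ E] (i : ι) :
    LinearMap.det (b.coneMap i) = (1 / 2) ^ Fintype.card ι * 2 := by
  rw [coneMap, LinearMap.det_smul, LinearMap.transvection.det, ← finrank_eq_card_basis b]
  norm_num

theorem norm_coneMap_lt_one (hb : ∀ i, ‖b i‖ = 1) {y : E}
    (hy : y ∈ convexHull ℝ ({0} ∪ range b)) (hy₁ : ‖y‖ < 1) (i : ι) :
    ‖b.coneMap i y‖ < 1 := by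
  obtain ⟨hα, hs⟩ := b.convexHull_zero_union_range_subset hy
  have hsi : ‖(∑ j, b.repr y j) • b i‖ ≤ 1 := by
    rwa [_root_.norm_smul, hb, mul_one,
      Real.norm_of_nonneg (Finset.sum_nonneg fun j _ => hα j)]
  rw [coneMap_apply, _root_.norm_smul, Real.norm_of_nonneg (by norm_num)]
  linarith [norm_add_le y ((∑ j, b.repr y j) • b i)]

theorem exists_norm_le_norm_coneMap [Nonempty ι] (hb : ∀ i, ‖b i‖ = 1) {y : E}
    (hy : ∀ j, 0 ≤ b.repr y j) : ∃ i, ‖y‖ ≤ ‖b.coneMap i y‖ := by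
  simpa only [coneMap_apply, b.sum_repr] using exists_norm_le_norm_half_smul_add hb hy

theorem lintegral_comp_coneMap_le [FiniteDimensional ℝ E] [MeasurableSpace E] [BorelSpace E]
    (μ : Measure E) [μ.IsAddHaarMeasure] (i : ι) {s : Set E} (hs : MeasurableSet s)
    (g : E → ℝ≥0∞) :
    ∫⁻ y in s, g (b.coneMap i y) ∂μ ≤
      2 ^ Fintype.card ι * ∫⁻ z in b.coneMap i '' s, g z ∂μ := by
  have hdet : LinearMap.det (b.coneMap i) ≠ 0 := by rw [det_coneMap]; positivity
  have hscale :
      (2 : ℝ≥0∞) ^ Fintype.card ι * ENNReal.ofReal |LinearMap.det (b.coneMap i)| = 2 := by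
    rw [det_coneMap, abs_of_pos (by positivity), ENNReal.ofReal_mul (by positivity),
      ENNReal.ofReal_pow (by norm_num), one_div, ENNReal.ofReal_inv_of_pos two_pos,
      ENNReal.ofReal_ofNat, ← mul_assoc, ← mul_pow, ENNReal.mul_inv_cancel two_ne_zero
      ENNReal.ofNat_ne_top, one_pow, one_mul]
  rw [(b.coneMap i).lintegral_image_eq_abs_det_mul μ hdet hs, ← mul_assoc, hscale, two_mul]
  exact le_self_add

end Module.Basis

section KleinModel

variable {n : ℕ}

noncomputable def kleinDensity (n : ℕ) (z : EuclideanSpace ℝ (Fin n)) : ℝ≥0∞ :=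
  ENNReal.ofReal ((1 - ‖z‖ ^ 2) ^ (-((n : ℝ) + 1) / 2))

@[fun_prop]
theorem measurable_kleinDensity : Measurable (kleinDensity n) := by
  unfold kleinDensity
  fun_prop

theorem hypVol_apply (s : Set (EuclideanSpace ℝ (Fin n))) :
    hypVol n s = ∫⁻ z in s ∩ ball 0 1, kleinDensity n z := by
  rw [hypVol, withDensity_apply', Measure.restrict_restrict' measurableSet_ball]
  rfl

theorem kleinDensity_le_of_norm_le {y z : EuclideanSpace ℝ (Fin n)} (h : ‖y‖ ≤ ‖z‖)
    (hz : ‖z‖ < 1) : kleinDensity n y ≤ kleinDensity n z := by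
  refine ENNReal.ofReal_le_ofReal (Real.rpow_le_rpow_of_nonpos ?_ ?_ ?_)
  · nlinarith [norm_nonneg y]
  · nlinarith [norm_nonneg y]
  · have : (0 : ℝ) ≤ n := n.cast_nonneg
    linarith

theorem kleinDensity_le_sum_coneMap {ι : Type*} [Fintype ι] [Nonempty ι]
    (b : Module.Basis ι ℝ (EuclideanSpace ℝ (Fin n))) (hb : ∀ i, ‖b i‖ = 1)
    {y : EuclideanSpace ℝ (Fin n)} (hy : y ∈ convexHull ℝ ({0} ∪ range b)) (hy₁ : ‖y‖ < 1) :
    kleinDensity n y ≤ ∑ i, kleinDensity n (b.coneMap i y) := by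
  obtain ⟨i, hi⟩ :=
    b.exists_norm_le_norm_coneMap hb (b.convexHull_zero_union_range_subset hy).1
  calc kleinDensity n y ≤ kleinDensity n (b.coneMap i y) :=
        kleinDensity_le_of_norm_le hi (b.norm_coneMap_lt_one hb hy hy₁ i)
    _ ≤ ∑ i, kleinDensity n (b.coneMap i y) :=
        Finset.single_le_sum (f := fun i => kleinDensity n (b.coneMap i y))
          (fun _ _ => zero_le) (Finset.mem_univ i)

end KleinModel

theorem volume_simplex_le_sum_cones (n : ℕ) (hn : 1 ≤ n)
    (x : Fin n → EuclideanSpace ℝ (Fin n))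
    (hunit : ∀ i, ‖x i‖ = 1) (hli : LinearIndependent ℝ x)
    (T : Fin n → EuclideanSpace ℝ (Fin n) → EuclideanSpace ℝ (Fin n))
    (hT : ∀ (i : Fin n) (α : Fin n → ℝ), (∀ j, 0 ≤ α j) → (∑ j, α j) ≤ 1 →
      T i (∑ j, α j • x j) =
        (1 / 2 : ℝ) • (∑ j, α j • x j) + ((1 / 2) * ∑ j, α j) • x i) :
    hypVol n (convexHull ℝ ({0} ∪ Set.range x)) ≤
      2 ^ n * ∑ i, hypVol n (T i '' convexHull ℝ ({0} ∪ Set.range x)) := by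
  have : Nonempty (Fin n) := ⟨⟨0, hn⟩⟩
  obtain ⟨b, rfl⟩ : ∃ b : Module.Basis (Fin n) ℝ (EuclideanSpace ℝ (Fin n)), ⇑b = x :=
    ⟨_, coe_basisOfLinearIndependentOfCardEqFinrank hli (by simp)⟩
  set D := convexHull ℝ ({0} ∪ range b)
  have hDB : MeasurableSet (D ∩ ball 0 1) :=
    ((finite_singleton 0).union (finite_range b)).isCompact_convexHull ℝ
      |>.isClosed.measurableSet.inter measurableSet_ball
  have hcone (i) : b.coneMap i '' (D ∩ ball 0 1) ⊆ T i '' D ∩ ball 0 1 := by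
    rintro _ ⟨y, ⟨hyD, hyB⟩, rfl⟩
    obtain ⟨hα, hs⟩ := b.convexHull_zero_union_range_subset hyD
    refine ⟨⟨y, hyD, ?_⟩, mem_ball_zero_iff.2 <|
      b.norm_coneMap_lt_one hunit hyD (mem_ball_zero_iff.1 hyB) i⟩
    rw [← b.sum_repr y, hT i _ hα hs, b.sum_repr y, b.coneMap_apply, smul_add, smul_smul]
  calc hypVol n D = ∫⁻ y in D ∩ ball 0 1, kleinDensity n y := hypVol_apply D
    _ ≤ ∫⁻ y in D ∩ ball 0 1, ∑ i, kleinDensity n (b.coneMap i y) :=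
        setLIntegral_mono (by fun_prop) fun y hy =>
          kleinDensity_le_sum_coneMap b hunit hy.1 (mem_ball_zero_iff.1 hy.2)
    _ = ∑ i, ∫⁻ y in D ∩ ball 0 1, kleinDensity n (b.coneMap i y) :=
        lintegral_finsetSum _ fun i _ => by fun_prop
    _ ≤ ∑ i, 2 ^ n * ∫⁻ z in b.coneMap i '' (D ∩ ball 0 1), kleinDensity n z := by
        gcongr with i
        simpa using b.lintegral_comp_coneMap_le volume i hDB (kleinDensity n)
    _ ≤ ∑ i, 2 ^ n * hypVol n (T i '' D) := by
        gcongr with i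
        rw [hypVol_apply]
        exact lintegral_mono_set (hcone i)
    _ = 2 ^ n * ∑ i, hypVol n (T i '' D) := (Finset.mul_sum _ _ _).symm
end

section
/- For each n ≥ 2 there exists a constant C_n > 0 such that for every φ with 0 < φ < arctan(1/10), the double integral ∫_0^1 ∫_0^{L(u)} v^{n-2} · (1 - (1-u)² - v²)^{-(n+1)/2} dv du is at most C_n, where L(u) = u·cot(φ) for 0 ≤ u ≤ sin²(φ) and L(u) = (1-u)·tan(φ) for sin²(φ) ≤ u ≤ 1. -/
/-!
On the region `0 ≤ v ≤ L(u)` the weight satisfies `1 - (1 - u)² - v² ≥ u`, so the inner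
integral is at most `L(u)^(n-1) u^(-(n+1)/2) / (n-1)`. On `[0, sin²φ]` this is
`cot^(n-1) φ · u^((n-3)/2) / (n-1)`, whose integral is `2 cos^(n-1) φ / (n-1)²`; on `[sin²φ, 1]` it is at most
`tan^(n-1) φ · u^(-(n+1)/2) / (n-1)`, whose integral is at most `2 sec^(n-1) φ / (n-1)²`.
Both stay bounded as long as `φ` stays away from `π/2`.
-/

open Real Set intervalIntegral MeasureTheory

lemma le_one_sub_sq_sub_sq_of_le_mul_cot {φ u v : ℝ} (hs : 0 < sin φ) (hu : 0 ≤ u)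
    (hus : u ≤ sin φ ^ 2) (hv : 0 ≤ v) (hvu : v ≤ u * cot φ) :
    u ≤ 1 - (1 - u) ^ 2 - v ^ 2 := by
  rw [cot_eq_cos_div_sin, ← mul_div_assoc, le_div_iff₀ hs] at hvu
  have hsq := pow_le_pow_left₀ (by positivity) hvu 2
  have : 0 ≤ sin φ ^ 2 * (u - u ^ 2 - v ^ 2) := by
    nlinarith [cos_sq' φ, mul_nonneg hu (sub_nonneg.2 hus)]
  nlinarith [nonneg_of_mul_nonneg_right this (by positivity)]

lemma le_one_sub_sq_sub_sq_of_le_mul_tan {φ u v : ℝ} (hc : 0 < cos φ) (hsu : sin φ ^ 2 ≤ u)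
    (hu : u ≤ 1) (hv : 0 ≤ v) (hvu : v ≤ (1 - u) * tan φ) :
    u ≤ 1 - (1 - u) ^ 2 - v ^ 2 := by
  rw [tan_eq_sin_div_cos, ← mul_div_assoc, le_div_iff₀ hc] at hvu
  have hsq := pow_le_pow_left₀ (by positivity) hvu 2
  rw [mul_pow, mul_pow, cos_sq'] at hsq
  have : 0 ≤ (1 - sin φ ^ 2) * (u * (1 - u) - v ^ 2) := by
    nlinarith [mul_nonneg (sub_nonneg.2 hu) (sub_nonneg.2 hsu)]
  nlinarith [nonneg_of_mul_nonneg_right this (by rw [← cos_sq']; positivity)]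

lemma integral_pow_mul_rpow_le (k : ℕ) {f : ℝ → ℝ} {p u L : ℝ} (hp : p ≤ 0) (hu : 0 < u)
    (hL : 0 ≤ L) (hf : ∀ v ∈ Icc 0 L, u ≤ f v) :
    ∫ v in 0..L, v ^ k * f v ^ p ≤ L ^ (k + 1) / (k + 1) * u ^ p := by
  by_cases hint : IntervalIntegrable (fun v => v ^ k * f v ^ p) volume 0 L
  · calc _ ≤ ∫ v in 0..L, v ^ k * u ^ p :=
          integral_mono_on hL hint
            ((by fun_prop : Continuous fun v : ℝ => v ^ k * u ^ p).intervalIntegrable _ _)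
            fun v hv =>
            mul_le_mul_of_nonneg_left (rpow_le_rpow_of_nonpos hu (hf v hv) hp) (pow_nonneg hv.1 k)
      _ = _ := by simp [intervalIntegral.integral_mul_const, integral_pow]
  · rw [integral_undef hint]
    positivity

lemma sq_rpow_div_two {x : ℝ} (hx : 0 ≤ x) (k : ℕ) : (x ^ 2) ^ ((k : ℝ) / 2) = x ^ k := by
  rw [← rpow_two, ← rpow_mul hx, mul_div_cancel₀ _ two_ne_zero, rpow_natCast]

-- `k = n - 2`, so the exponent `-(k + 3) / 2` is the paper's `-(n + 1) / 2`.
noncomputable def coneInnerIntegral (k : ℕ) (φ u : ℝ) : ℝ :=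
  ∫ v in (0 : ℝ)..(if u ≤ sin φ ^ 2 then u * cot φ else (1 - u) * tan φ),
    v ^ k * (1 - (1 - u) ^ 2 - v ^ 2) ^ (-((k : ℝ) + 3) / 2)

lemma coneInnerIntegral_le_of_le_sin_sq (k : ℕ) {φ u : ℝ} (hs : 0 < sin φ) (hc : 0 < cos φ)
    (hu : 0 < u) (hus : u ≤ sin φ ^ 2) :
    coneInnerIntegral k φ u ≤ cot φ ^ (k + 1) / (k + 1) * u ^ (((k : ℝ) - 1) / 2) := by
  have hcot : 0 ≤ cot φ := by rw [cot_eq_cos_div_sin]; positivity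
  calc coneInnerIntegral k φ u
      ≤ (u * cot φ) ^ (k + 1) / (k + 1) * u ^ (-((k : ℝ) + 3) / 2) := by
        rw [coneInnerIntegral, if_pos hus]
        exact integral_pow_mul_rpow_le k (by linarith [(k.cast_nonneg : (0 : ℝ) ≤ k)]) hu
          (by positivity) fun v hv => le_one_sub_sq_sub_sq_of_le_mul_cot hs hu.le hus hv.1 hv.2
    _ = cot φ ^ (k + 1) / (k + 1) * u ^ (((k : ℝ) - 1) / 2) := by
        rw [mul_pow, ← rpow_natCast u, mul_comm (u ^ _), mul_div_right_comm, mul_assoc,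
          ← rpow_add hu]
        push_cast
        ring_nf

lemma coneInnerIntegral_le_of_sin_sq_lt (k : ℕ) {φ u : ℝ} (hs : 0 < sin φ) (hc : 0 < cos φ)
    (hsu : sin φ ^ 2 < u) (hu : u ≤ 1) :
    coneInnerIntegral k φ u ≤ tan φ ^ (k + 1) / (k + 1) * u ^ (-((k : ℝ) + 3) / 2) := by
  have htan : 0 ≤ tan φ := by rw [tan_eq_sin_div_cos]; positivity
  have hu0 : 0 < u := (sq_nonneg _).trans_lt hsu
  calc coneInnerIntegral k φ u
      ≤ ((1 - u) * tan φ) ^ (k + 1) / (k + 1) * u ^ (-((k : ℝ) + 3) / 2) := by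
        rw [coneInnerIntegral, if_neg hsu.not_ge]
        exact integral_pow_mul_rpow_le k (by linarith [(k.cast_nonneg : (0 : ℝ) ≤ k)]) hu0
          (by nlinarith) fun v hv => le_one_sub_sq_sub_sq_of_le_mul_tan hc hsu.le hu hv.1 hv.2
    _ ≤ tan φ ^ (k + 1) / (k + 1) * u ^ (-((k : ℝ) + 3) / 2) := by
        gcongr
        exact mul_le_of_le_one_left htan (by linarith)

lemma integral_coneInnerIntegral_le_cos_pow (k : ℕ) {φ : ℝ} (hs : 0 < sin φ) (hc : 0 < cos φ)
    (hint : IntervalIntegrable (coneInnerIntegral k φ) volume 0 (sin φ ^ 2)) :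
    ∫ u in 0..sin φ ^ 2, coneInnerIntegral k φ u ≤ 2 * cos φ ^ (k + 1) / (k + 1) ^ 2 := by
  have hk : -1 < ((k : ℝ) - 1) / 2 := by linarith [(k.cast_nonneg : (0 : ℝ) ≤ k)]
  calc ∫ u in 0..sin φ ^ 2, coneInnerIntegral k φ u
      ≤ ∫ u in 0..sin φ ^ 2, cot φ ^ (k + 1) / (k + 1) * u ^ (((k : ℝ) - 1) / 2) :=
        integral_mono_on_of_le_Ioo (sq_nonneg _) hint
          ((intervalIntegrable_rpow' hk).const_mul _) fun u hu =>
          coneInnerIntegral_le_of_le_sin_sq k hs hc hu.1 hu.2.le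
    _ = 2 * cos φ ^ (k + 1) / (k + 1) ^ 2 := by
        have hexp : ((k : ℝ) - 1) / 2 + 1 = ((k + 1 : ℕ) : ℝ) / 2 := by push_cast; ring
        rw [intervalIntegral.integral_const_mul, integral_rpow (Or.inl hk), hexp,
          zero_rpow (by positivity), sq_rpow_div_two hs.le, cot_eq_cos_div_sin, div_pow]
        field_simp
        push_cast
        ring

lemma integral_coneInnerIntegral_le_inv_cos_pow (k : ℕ) {φ : ℝ} (hs : 0 < sin φ) (hc : 0 < cos φ)
    (hint : IntervalIntegrable (coneInnerIntegral k φ) volume (sin φ ^ 2) 1) :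
    ∫ u in sin φ ^ 2..1, coneInnerIntegral k φ u ≤ 2 * (cos φ)⁻¹ ^ (k + 1) / (k + 1) ^ 2 := by
  have h0 : (0 : ℝ) ∉ uIcc (sin φ ^ 2) 1 := by
    rw [uIcc_of_le (sin_sq_le_one φ)]
    exact fun h => (pow_pos hs 2).not_ge h.1
  have hk : -((k : ℝ) + 3) / 2 ≠ -1 := by linarith [(k.cast_nonneg : (0 : ℝ) ≤ k)]
  calc ∫ u in sin φ ^ 2..1, coneInnerIntegral k φ u
      ≤ ∫ u in sin φ ^ 2..1, tan φ ^ (k + 1) / (k + 1) * u ^ (-((k : ℝ) + 3) / 2) :=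
        integral_mono_on_of_le_Ioo (sin_sq_le_one φ) hint
          ((intervalIntegrable_rpow (Or.inr h0)).const_mul _) fun u hu =>
          coneInnerIntegral_le_of_sin_sq_lt k hs hc hu.1 hu.2.le
    _ = tan φ ^ (k + 1) / (k + 1) * (((sin φ ^ (k + 1))⁻¹ - 1) * (2 / (k + 1))) := by
        have hexp : -((k : ℝ) + 3) / 2 + 1 = -(((k + 1 : ℕ) : ℝ) / 2) := by push_cast; ring
        rw [intervalIntegral.integral_const_mul, integral_rpow (Or.inr ⟨hk, h0⟩), hexp,
          one_rpow, rpow_neg (sq_nonneg _), sq_rpow_div_two hs.le]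
        field_simp
        push_cast
        ring
    _ ≤ tan φ ^ (k + 1) / (k + 1) * ((sin φ ^ (k + 1))⁻¹ * (2 / (k + 1))) := by
        have : 0 ≤ tan φ := by rw [tan_eq_sin_div_cos]; positivity
        gcongr
        linarith
    _ = 2 * (cos φ)⁻¹ ^ (k + 1) / (k + 1) ^ 2 := by
        rw [tan_eq_sin_div_cos, div_pow, inv_pow]
        field_simp

theorem cone_integral_bounded (n : ℕ) (hn : 2 ≤ n) :
    ∃ C : ℝ, 0 < C ∧ ∀ φ : ℝ, 0 < φ → φ < Real.arctan (1 / 10) →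
      (∫ u in (0 : ℝ)..1,
        ∫ v in (0 : ℝ)..(if u ≤ sin φ ^ 2 then u * Real.cot φ else (1 - u) * Real.tan φ),
          v ^ (n - 2) * (1 - (1 - u) ^ 2 - v ^ 2) ^ (-((n : ℝ) + 1) / 2)) ≤ C := by
  obtain ⟨k, rfl⟩ := Nat.exists_eq_add_of_le' hn
  have hexp : -(((k + 2 : ℕ) : ℝ) + 1) / 2 = -((k : ℝ) + 3) / 2 := by push_cast; ring
  rw [Nat.add_sub_cancel, hexp]
  change ∃ C : ℝ, 0 < C ∧ ∀ φ : ℝ, 0 < φ → φ < arctan (1 / 10) →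
    ∫ u in (0 : ℝ)..1, coneInnerIntegral k φ u ≤ C
  have hθ := cos_arctan_pos (1 / 10)
  refine ⟨2 + 2 * (cos (arctan (1 / 10)))⁻¹ ^ (k + 1), by positivity, fun φ hφ0 hφθ => ?_⟩
  have hφ : φ < π / 2 := hφθ.trans (arctan_lt_pi_div_two _)
  have hs : 0 < sin φ := sin_pos_of_pos_of_lt_pi hφ0 (by linarith [pi_pos])
  have hc : 0 < cos φ := cos_pos_of_mem_Ioo ⟨by linarith, hφ⟩
  have hcθ : cos (arctan (1 / 10)) ≤ cos φ :=
    cos_le_cos_of_nonneg_of_le_pi hφ0.le (by linarith [pi_pos, arctan_lt_pi_div_two (1 / 10)])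
      hφθ.le
  have hk : (1 : ℝ) ≤ ((k : ℝ) + 1) ^ 2 :=
    one_le_pow₀ (by linarith [(k.cast_nonneg : (0 : ℝ) ≤ k)])
  by_cases hint : IntervalIntegrable (coneInnerIntegral k φ) volume 0 1
  · have hs2 : sin φ ^ 2 ∈ uIcc 0 1 := by
      rw [uIcc_of_le zero_le_one]; exact ⟨sq_nonneg _, sin_sq_le_one φ⟩
    have hint₁ := hint.mono_set (uIcc_subset_uIcc_left hs2)
    have hint₂ := hint.mono_set (uIcc_subset_uIcc_right hs2)
    rw [← integral_add_adjacent_intervals hint₁ hint₂]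
    gcongr ?_ + ?_
    · calc _ ≤ 2 * cos φ ^ (k + 1) / (k + 1) ^ 2 :=
            integral_coneInnerIntegral_le_cos_pow k hs hc hint₁
        _ ≤ 2 * cos φ ^ (k + 1) := div_le_self (by positivity) hk
        _ ≤ 2 := mul_le_of_le_one_right zero_le_two (pow_le_one₀ hc.le (cos_le_one φ))
    · calc _ ≤ 2 * (cos φ)⁻¹ ^ (k + 1) / (k + 1) ^ 2 :=
            integral_coneInnerIntegral_le_inv_cos_pow k hs hc hint₂
        _ ≤ 2 * (cos φ)⁻¹ ^ (k + 1) := div_le_self (by positivity) hk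
        _ ≤ 2 * (cos (arctan (1 / 10)))⁻¹ ^ (k + 1) := by gcongr
  · rw [integral_undef hint]
    positivity
end

section
/- For each dimension n ≥ 1 there exists a constant c_n > 0 such that for every natural number N ≥ n + 1 there exist N points x_1, ..., x_N in the open unit ball B ⊂ ℝ^n with μ_n(convexHull {x_1, ..., x_N}) > c_n · N. -/
open MeasureTheory Metric Set

/-!
Fix a boundary direction `e₀`. At Euclidean depth `s²` below `e₀` take the corner simplex with
one radial edge of length `s²/2` and transverse edges of length `s/2`: it stays inside the ball and
contains a box of Euclidean volume `≍ s^(n+1)` on which `1 - ‖x‖² ≤ (2s)²`, so the density is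
`≥ (2s)^-(n+1)` and every such simplex has hyperbolic volume bounded below independently of `s`.
For `s = 2^-k` the boxes lie in disjoint radial slabs, so `N` points spent on `⌊N/(n+1)⌋` of these
simplices span a hull of hyperbolic volume linear in `N`.
-/

theorem add_sum_smul_mem_convexHull_insert {E ι : Type*} [AddCommGroup E] [Module ℝ E]
    [Fintype ι] (p : E) (v : ι → E) {t : ι → ℝ} (ht₀ : ∀ i, 0 ≤ t i) (ht₁ : ∑ i, t i ≤ 1) :
    p + ∑ i, t i • v i ∈ convexHull ℝ (insert p (range fun i => p + v i)) := by
  let w : Option ι → ℝ := fun o => o.elim (1 - ∑ i, t i) t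
  let V : Option ι → E := fun o => o.elim p fun i => p + v i
  have hcomb : ∑ o, w o • V o = p + ∑ i, t i • v i := by
    simp only [Fintype.sum_option, w, V, Option.elim, smul_add, Finset.sum_add_distrib,
      ← Finset.sum_smul, sub_smul, one_smul]
    abel
  rw [← Option.range_elim, ← hcomb]
  refine (convex_convexHull ℝ _).sum_mem (fun o _ => ?_) ?_
    fun o _ => subset_convexHull ℝ _ (mem_range_self o)
  · cases o
    · simpa [w] using ht₁
    · exact ht₀ _
  · simp [w, Fintype.sum_option]

section CornerBox

variable {ι : Type*} [Fintype ι]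

def cornerBox (p : EuclideanSpace ℝ ι) (ℓ : ι → ℝ) : Set (EuclideanSpace ℝ ι) :=
  WithLp.ofLp ⁻¹' univ.pi fun i => Ico (p i) (p i + ℓ i)

omit [Fintype ι] in
theorem mem_cornerBox {p x : EuclideanSpace ℝ ι} {ℓ : ι → ℝ} :
    x ∈ cornerBox p ℓ ↔ ∀ i, p i ≤ x i ∧ x i < p i + ℓ i := by
  simp [cornerBox]

theorem measurableSet_cornerBox (p : EuclideanSpace ℝ ι) (ℓ : ι → ℝ) :
    MeasurableSet (cornerBox p ℓ) :=
  (MeasurableSet.univ_pi fun _ => measurableSet_Ico).preimage (WithLp.measurable_ofLp _ _)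

theorem volume_cornerBox (p : EuclideanSpace ℝ ι) (ℓ : ι → ℝ) :
    volume (cornerBox p ℓ) = ∏ i, ENNReal.ofReal (ℓ i) := by
  rw [cornerBox, (PiLp.volume_preserving_ofLp ι).measure_preimage
    (MeasurableSet.univ_pi fun _ => measurableSet_Ico).nullMeasurableSet, Real.volume_pi_Ico]
  simp

theorem cornerBox_subset_convexHull [DecidableEq ι] (p : EuclideanSpace ℝ ι) {δ : ι → ℝ}
    (hδ : ∀ i, 0 < δ i) :
    cornerBox p (fun i => δ i / Fintype.card ι) ⊆
      convexHull ℝ (insert p (range fun i => p + EuclideanSpace.single i (δ i))) := by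
  intro x hx
  rw [mem_cornerBox] at hx
  set t : ι → ℝ := fun i => (x i - p i) / δ i
  have ht_le : ∀ i, t i ≤ 1 / Fintype.card ι := fun i =>
    calc t i ≤ δ i / Fintype.card ι / δ i :=
          div_le_div_of_nonneg_right (by linarith [(hx i).2]) (hδ i).le
      _ = 1 / Fintype.card ι := by rw [div_right_comm, div_self (hδ i).ne']
  have hx_eq : x = p + ∑ i, t i • EuclideanSpace.single i (δ i) := by
    ext j
    simp [t, Pi.single_apply, div_mul_cancel₀ _ (hδ j).ne']
  rw [hx_eq]
  refine add_sum_smul_mem_convexHull_insert _ _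
    (fun i => div_nonneg (sub_nonneg.2 (hx i).1) (hδ i).le) ?_
  calc ∑ i, t i ≤ ∑ _i : ι, 1 / (Fintype.card ι : ℝ) := Finset.sum_le_sum fun i _ => ht_le i
    _ ≤ 1 := by simpa [div_eq_mul_inv] using div_self_le_one (Fintype.card ι : ℝ)

end CornerBox

section DepthSimplex

variable {ι : Type*} [Fintype ι] [DecidableEq ι] (i₀ : ι)

noncomputable def depthStep (s : ℝ) (i : ι) : ℝ := s / 2 * if i = i₀ then s else 1

noncomputable def depthBase (s : ℝ) : EuclideanSpace ℝ ι := EuclideanSpace.single i₀ (1 - s ^ 2)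

noncomputable def depthVertex (s : ℝ) : Option ι → EuclideanSpace ℝ ι :=
  fun o => o.elim (depthBase i₀ s) fun i =>
    depthBase i₀ s + EuclideanSpace.single i (depthStep i₀ s i)

noncomputable def depthBox (s : ℝ) : Set (EuclideanSpace ℝ ι) :=
  cornerBox (depthBase i₀ s) fun i => depthStep i₀ s i / Fintype.card ι

variable {i₀} {s : ℝ}

omit [Fintype ι] in
theorem depthStep_pos (hs : 0 < s) (i : ι) : 0 < depthStep i₀ s i := by
  unfold depthStep; split_ifs <;> positivity

theorem depthVertex_mem_ball (hs₀ : 0 < s) (hs₁ : s ≤ 1) (o : Option ι) :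
    depthVertex i₀ s o ∈ ball 0 1 := by
  have hs2 : s ^ 2 ≤ 1 := pow_le_one₀ hs₀.le hs₁
  rw [mem_ball_zero_iff]
  rcases o with _ | i
  · simp only [depthVertex, Option.elim, depthBase, PiLp.norm_single, Real.norm_eq_abs]
    rw [abs_of_nonneg (by linarith)]
    nlinarith
  · by_cases hi : i = i₀
    · subst hi
      simp only [depthVertex, Option.elim, depthBase, depthStep, ↓reduceIte, ← PiLp.single_add,
        PiLp.norm_single, Real.norm_eq_abs]
      rw [abs_of_nonneg (by nlinarith)]
      nlinarith
    · have horth : inner ℝ (depthBase i₀ s) (EuclideanSpace.single i (depthStep i₀ s i)) = 0 := by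
        simp [depthBase, EuclideanSpace.inner_single_left, Ne.symm hi]
      have hpyth := norm_add_sq_eq_norm_sq_add_norm_sq_real horth
      set y := depthBase i₀ s + EuclideanSpace.single i (depthStep i₀ s i)
      simp only [depthBase, depthStep, if_neg hi, PiLp.norm_single, Real.norm_eq_abs,
        abs_mul_abs_self] at hpyth
      change ‖y‖ < 1
      nlinarith [norm_nonneg y, mul_pos hs₀ hs₀]

theorem measurableSet_depthBox : MeasurableSet (depthBox i₀ s) :=
  measurableSet_cornerBox _ _

theorem volume_depthBox (hs : 0 < s) :
    volume (depthBox i₀ s) = ENNReal.ofReal ((s / (2 * Fintype.card ι)) ^ Fintype.card ι * s) := by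
  rw [depthBox, volume_cornerBox, ← ENNReal.ofReal_prod_of_nonneg
    fun i _ => div_nonneg (depthStep_pos hs i).le (Nat.cast_nonneg _)]
  congr 1
  simp only [depthStep, mul_div_right_comm, Finset.prod_mul_distrib]
  simp [div_div, div_pow]

theorem depthBox_subset_convexHull (hs : 0 < s) :
    depthBox i₀ s ⊆ convexHull ℝ (range (depthVertex i₀ s)) := by
  have : range (depthVertex i₀ s) = _ := Option.range_elim _ _
  rw [this]
  exact cornerBox_subset_convexHull _ (depthStep_pos hs)

theorem depthBox_subset_ball (hs₀ : 0 < s) (hs₁ : s ≤ 1) : depthBox i₀ s ⊆ ball 0 1 :=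
  (depthBox_subset_convexHull hs₀).trans <|
    (convex_ball 0 1).convexHull_subset_iff.2 <| range_subset_iff.2 <| depthVertex_mem_ball hs₀ hs₁

theorem depthBox_subset_slab (hs : 0 < s) :
    depthBox i₀ s ⊆ (fun x => x i₀) ⁻¹' Ico (1 - s ^ 2) (1 - (s / 2) ^ 2) := by
  intro x hx
  have hc : (1 : ℝ) ≤ Fintype.card ι := Nat.one_le_cast.2 (Fintype.card_pos_iff.2 ⟨i₀⟩)
  have ⟨hl, hr⟩ := mem_cornerBox.1 hx i₀
  simp only [depthBase, depthStep, ↓reduceIte, PiLp.single_apply] at hl hr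
  have : s / 2 * s / Fintype.card ι ≤ s / 2 * s := div_le_self (by positivity) hc
  exact ⟨hl, by nlinarith⟩

theorem one_sub_sq_norm_le_of_mem_depthBox (hs₀ : 0 < s) (hs₁ : s ≤ 1)
    {x : EuclideanSpace ℝ ι} (hx : x ∈ depthBox i₀ s) : 1 - ‖x‖ ^ 2 ≤ (2 * s) ^ 2 := by
  have hx₀ : 1 - s ^ 2 ≤ x i₀ := by simpa using (depthBox_subset_slab hs₀ hx).1
  have hcoord : |x i₀| ≤ ‖x‖ := by simpa using PiLp.norm_apply_le x i₀
  have hs2 : s ^ 2 ≤ 1 := pow_le_one₀ hs₀.le hs₁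
  rw [abs_of_nonneg (by linarith)] at hcoord
  nlinarith

open Function in
theorem pairwise_disjoint_depthBox (i₀ : ι) :
    Pairwise (Disjoint on fun k : ℕ => depthBox i₀ ((2⁻¹ : ℝ) ^ k)) := by
  have hmono : Monotone fun k : ℕ => 1 - ((2⁻¹ : ℝ) ^ k) ^ 2 := fun k l hkl =>
    sub_le_sub_left (pow_le_pow_left₀ (by positivity)
      (pow_le_pow_of_le_one (by norm_num) (by norm_num) hkl) 2) 1
  refine hmono.pairwise_disjoint_on_Ico_succ.mono fun k l hkl => ?_
  refine (hkl.preimage fun x : EuclideanSpace ℝ ι => x i₀).mono ?_ ?_ <;>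
  · refine (depthBox_subset_slab (by positivity)).trans_eq ?_
    simp [pow_succ, div_eq_mul_inv]

end DepthSimplex

theorem inv_pow_le_rpow_neg_div_two {u t : ℝ} (hu : 0 < u) (ht : 0 < t) (h : u ≤ t ^ 2) (n : ℕ) :
    (t ^ (n + 1))⁻¹ ≤ u ^ (-((n : ℝ) + 1) / 2) :=
  calc (t ^ (n + 1))⁻¹ = (t ^ 2) ^ (-((n : ℝ) + 1) / 2) := by
        rw [← Real.rpow_natCast_mul ht.le, show ((2 : ℕ) : ℝ) * (-((n : ℝ) + 1) / 2)
          = -((n + 1 : ℕ) : ℝ) by push_cast; ring, Real.rpow_neg ht.le, Real.rpow_natCast]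
    _ ≤ u ^ (-((n : ℝ) + 1) / 2) :=
        Real.rpow_le_rpow_of_nonpos hu h (by linarith [(n.cast_nonneg : (0 : ℝ) ≤ n)])

theorem ofReal_mul_volume_le_hypVol {n : ℕ} {S : Set (EuclideanSpace ℝ (Fin n))}
    (hS : MeasurableSet S) (hSb : S ⊆ ball 0 1) {ρ : ℝ}
    (h : ∀ x ∈ S, ρ ≤ (1 - ‖x‖ ^ 2) ^ (-((n : ℝ) + 1) / 2)) :
    ENNReal.ofReal ρ * volume S ≤ hypVol n S := by
  rw [hypVol, withDensity_apply _ hS, Measure.restrict_restrict hS,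
    inter_eq_self_of_subset_left hSb, ← setLIntegral_const]
  exact setLIntegral_mono' hS fun x hx => ENNReal.ofReal_le_ofReal (h x hx)

theorem hypVol_depthBox_ge {n : ℕ} (i₀ : Fin n) {s : ℝ} (hs₀ : 0 < s) (hs₁ : s ≤ 1) :
    ENNReal.ofReal ((2 * n : ℝ) ^ n * 2 ^ (n + 1))⁻¹ ≤ hypVol n (depthBox i₀ s) := by
  have hdensity : ∀ x ∈ depthBox i₀ s,
      ((2 * s) ^ (n + 1))⁻¹ ≤ (1 - ‖x‖ ^ 2) ^ (-((n : ℝ) + 1) / 2) := fun x hx => by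
    have hx₁ : ‖x‖ < 1 := mem_ball_zero_iff.1 (depthBox_subset_ball hs₀ hs₁ hx)
    exact inv_pow_le_rpow_neg_div_two (by nlinarith [norm_nonneg x]) (by positivity)
      (one_sub_sq_norm_le_of_mem_depthBox hs₀ hs₁ hx) n
  calc ENNReal.ofReal ((2 * n : ℝ) ^ n * 2 ^ (n + 1))⁻¹
      = ENNReal.ofReal ((2 * s) ^ (n + 1))⁻¹ * volume (depthBox i₀ s) := by
        rw [volume_depthBox hs₀, Fintype.card_fin, ← ENNReal.ofReal_mul (by positivity)]
        have hn : (n : ℝ) ≠ 0 := Nat.cast_ne_zero.2 i₀.pos.ne'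
        rw [show (s / (2 * n)) ^ n * s = s ^ (n + 1) / (2 * n) ^ n by
          rw [div_pow, pow_succ]; ring]
        congr 1
        field_simp
        ring
    _ ≤ hypVol n (depthBox i₀ s) :=
        ofReal_mul_volume_le_hypVol measurableSet_depthBox (depthBox_subset_ball hs₀ hs₁) hdensity

theorem exists_convexHull_hypVol_ge {n : ℕ} (i₀ : Fin n) (M : ℕ) :
    ∃ v : Fin M × Option (Fin n) → EuclideanSpace ℝ (Fin n), (∀ j, v j ∈ ball 0 1) ∧
      ENNReal.ofReal (M * ((2 * n : ℝ) ^ n * 2 ^ (n + 1))⁻¹) ≤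
        hypVol n (convexHull ℝ (range v)) := by
  set s : ℕ → ℝ := fun k => (2⁻¹ : ℝ) ^ k
  have hs₀ (k : ℕ) : 0 < s k := by positivity
  have hs₁ (k : ℕ) : s k ≤ 1 := pow_le_one₀ (by norm_num) (by norm_num)
  set v : Fin M × Option (Fin n) → EuclideanSpace ℝ (Fin n) := fun j => depthVertex i₀ (s j.1) j.2
  have hboxes : ⋃ k ∈ Finset.range M, depthBox i₀ (s k) ⊆ convexHull ℝ (range v) :=
    iUnion₂_subset fun k hk => (depthBox_subset_convexHull (hs₀ k)).trans <| convexHull_mono <|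
      range_subset_iff.2 fun o => ⟨(⟨k, Finset.mem_range.1 hk⟩, o), rfl⟩
  refine ⟨v, fun j => depthVertex_mem_ball (hs₀ _) (hs₁ _) _, ?_⟩
  calc ENNReal.ofReal (M * ((2 * n : ℝ) ^ n * 2 ^ (n + 1))⁻¹)
      = ∑ _k ∈ Finset.range M, ENNReal.ofReal ((2 * n : ℝ) ^ n * 2 ^ (n + 1))⁻¹ := by
        simp [ENNReal.ofReal_mul]
    _ ≤ ∑ k ∈ Finset.range M, hypVol n (depthBox i₀ (s k)) :=
        Finset.sum_le_sum fun k _ => hypVol_depthBox_ge i₀ (hs₀ k) (hs₁ k)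
    _ = hypVol n (⋃ k ∈ Finset.range M, depthBox i₀ (s k)) :=
        (measure_biUnion_finset (fun k _ l _ hkl => pairwise_disjoint_depthBox i₀ hkl)
          fun _ _ => measurableSet_depthBox).symm
    _ ≤ hypVol n (convexHull ℝ (range v)) := measure_mono hboxes

theorem exists_surjective_fin {α : Type*} [Fintype α] [Nonempty α] {N : ℕ}
    (h : Fintype.card α ≤ N) : ∃ g : Fin N → α, Function.Surjective g := by
  obtain ⟨f⟩ := Function.Embedding.nonempty_of_card_le (h.trans (Fintype.card_fin N).ge)
  exact ⟨Function.invFun f, Function.invFun_surjective f.injective⟩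

theorem lt_two_mul_mul_div {N d : ℕ} (h : d ≤ N) (hd : 0 < d) : N < 2 * d * (N / d) := by
  have h₁ := Nat.lt_div_mul_add (a := N) hd
  have h₂ : 1 ≤ N / d := (Nat.one_le_div_iff hd).2 h
  nlinarith

theorem exists_polytope_volume_gt_linear (n : ℕ) (hn : 1 ≤ n) :
    ∃ c : ℝ, 0 < c ∧ ∀ N : ℕ, n + 1 ≤ N →
      ∃ x : Fin N → EuclideanSpace ℝ (Fin n),
        (∀ i, x i ∈ ball (0 : EuclideanSpace ℝ (Fin n)) 1) ∧
        ENNReal.ofReal (c * N) < hypVol n (convexHull ℝ (Set.range x)) := by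
  set κ : ℝ := ((2 * n : ℝ) ^ n * 2 ^ (n + 1))⁻¹
  refine ⟨κ / (2 * (n + 1)), by positivity, fun N hN => ?_⟩
  set M := N / (n + 1)
  have hM : 1 ≤ M := (Nat.one_le_div_iff n.succ_pos).2 hN
  obtain ⟨v, hv_ball, hv_vol⟩ := exists_convexHull_hypVol_ge ⟨0, hn⟩ M
  have : Nonempty (Fin M × Option (Fin n)) := ⟨(⟨0, hM⟩, none)⟩
  obtain ⟨g, hg⟩ := exists_surjective_fin (α := Fin M × Option (Fin n)) (N := N)
    (by simpa using Nat.div_mul_le_self N (n + 1))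
  refine ⟨v ∘ g, fun i => hv_ball (g i), ?_⟩
  rw [hg.range_comp]
  refine lt_of_lt_of_le ?_ hv_vol
  have hN' : (N : ℝ) < 2 * (n + 1) * M := by exact_mod_cast lt_two_mul_mul_div hN n.succ_pos
  rw [ENNReal.ofReal_lt_ofReal_iff (by positivity)]
  calc κ / (2 * (n + 1)) * N < κ / (2 * (n + 1)) * (2 * (n + 1) * M) := by gcongr
    _ = M * κ := by field_simp
end
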